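/- In the global extension constructed in Vorob'ev's theorem via iterated adhesive extensions, for each i ≥ 2 the conditional independence (X_{R_i} ⊥ X_{(E_1∪…∪E_{i−1})∖S_i} | X_{S_i}) holds, where S_i = E_i ∩ (E_1∪…∪E_{i−1}) and R_i = E_i ∖ S_i. -/

import Mathlib

/-!
The extension is built one hyperedge at a time: the distribution `Q_{i-1}` on
`E_1 ∪ … ∪ E_{i-1}` is glued with `P_{E_i}` along the separator `S_i`, as
`Q_i = Q_{i-1} · P_{E_i} / P_{S_i}`. By the running intersection property `S_i` lies in an earlier
edge `E_j`, on which `Q_{i-1}` has marginal `P_{E_j}`, so pairwise consistency makes the two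
separator marginals agree. Gluing two consistent distributions produces one with both of them as
marginals; hence later steps do not change earlier marginals, and the marginal of the final
distribution on `E_1 ∪ … ∪ E_i` is `Q_i`, whose defining formula is the factorization asked for.
-/

open Finset

variable {ι V : Type} [DecidableEq ι] [Fintype V] [DecidableEq V]

/-- Restriction of an assignment of values on `S` to a subset `T ⊆ S`. -/
def restr {S T : Finset ι} (h : T ⊆ S) (w : ↥S → V) : ↥T → V :=
  fun i => w ⟨i.1, h i.2⟩

/-- Marginal of a distribution on the variables in `S` to the variables in `T ⊆ S`. -/
noncomputable def marg {S T : Finset ι} (p : (↥S → V) → ℝ) (h : T ⊆ S) :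
    (↥T → V) → ℝ :=
  fun z => ∑ w : ↥S → V, if restr h w = z then p w else 0

/-- The running intersection property for the ordered edge list `E 0, …, E (n-1)`. -/
def RIP {n : ℕ} (E : Fin n → Finset ι) : Prop :=
  ∀ i : Fin n, 0 < (i : ℕ) →
    ∃ j : Fin n, j < i ∧
      E i ∩ ((Finset.univ.filter (fun k : Fin n => k < i)).biUnion E) ⊆ E j

/-- The union of the hyperedges preceding `i` in the ordering. -/
def prevU {n : ℕ} (E : Fin n → Finset ι) (i : Fin n) : Finset ι :=
  (Finset.univ.filter (fun k : Fin n => k < i)).biUnion E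

lemma prevU_subset {n : ℕ} (E : Fin n → Finset ι) (i : Fin n) :
    prevU E i ⊆ Finset.univ.biUnion E :=
  Finset.biUnion_subset.mpr fun k _ => Finset.subset_biUnion_of_mem E (Finset.mem_univ k)

lemma edge_subset {n : ℕ} (E : Fin n → Finset ι) (i : Fin n) :
    E i ⊆ Finset.univ.biUnion E :=
  Finset.subset_biUnion_of_mem E (Finset.mem_univ i)

lemma sep_subset {n : ℕ} (E : Fin n → Finset ι) (i : Fin n) :
    E i ∩ prevU E i ⊆ Finset.univ.biUnion E :=
  Finset.inter_subset_left.trans (edge_subset E i)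

lemma upto_subset {n : ℕ} (E : Fin n → Finset ι) (i : Fin n) :
    prevU E i ∪ E i ⊆ Finset.univ.biUnion E :=
  Finset.union_subset (prevU_subset E i) (edge_subset E i)

section Marginal

variable {S T R : Finset ι}

theorem marg_nonneg {p : (↥S → V) → ℝ} (hp : ∀ w, 0 ≤ p w) (h : T ⊆ S) (z : ↥T → V) :
    0 ≤ marg p h z :=
  sum_nonneg fun w _ => by split_ifs <;> simp [hp w]

theorem le_marg {p : (↥S → V) → ℝ} (hp : ∀ w, 0 ≤ p w) (h : T ⊆ S) (w : ↥S → V) :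
    p w ≤ marg p h (restr h w) := by
  have hle := single_le_sum (fun u _ => (by split_ifs <;> simp [hp u] :
    0 ≤ if restr h u = restr h w then p u else 0)) (mem_univ w)
  unfold marg
  simpa using hle

theorem sum_marg (p : (↥S → V) → ℝ) (h : T ⊆ S) : ∑ z, marg p h z = ∑ w, p w := by
  unfold marg
  rw [sum_comm]
  simp

theorem marg_self (p : (↥S → V) → ℝ) (h : S ⊆ S) : marg p h = p := by
  funext z
  exact (sum_ite_eq' univ z p).trans (if_pos (mem_univ z))

theorem marg_marg (p : (↥S → V) → ℝ) (hTS : T ⊆ S) (hRT : R ⊆ T) :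
    marg (marg p hTS) hRT = marg p (hRT.trans hTS) := by
  funext z
  unfold marg
  calc _ = ∑ y : ↥T → V, ∑ w : ↥S → V,
        if restr hTS w = y then (if restr hRT y = z then p w else 0) else 0 :=
      sum_congr rfl fun y _ => by split_ifs <;> simp [*]
    _ = _ := by
      rw [sum_comm]
      simp only [sum_ite_eq, mem_univ, if_true]
      rfl

theorem marg_of_eq_empty (p : (↥S → V) → ℝ) (h : T ⊆ S) (hT : T = ∅) (z : ↥T → V) :
    marg p h z = ∑ w, p w := by
  subst hT
  simp [marg, Subsingleton.elim _ z]

theorem marg_eq_mul_of_fiber {f g : (↥S → V) → ℝ} (h : T ⊆ S) (z : ↥T → V) (a : ℝ)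
    (hfg : ∀ w, restr h w = z → f w = a * g w) : marg f h z = a * marg g h z := by
  unfold marg
  rw [mul_sum]
  refine sum_congr rfl fun w _ => ?_
  split_ifs with hw
  · exact hfg w hw
  · rw [mul_zero]

end Marginal

section Consistent

variable {A B C : Finset ι}

def Consistent (p : (↥A → V) → ℝ) (q : (↥B → V) → ℝ) : Prop :=
  marg p (inter_subset_left : A ∩ B ⊆ A) = marg q inter_subset_right

theorem Consistent.of_marg_eq {p : (↥A → V) → ℝ} {q : (↥B → V) → ℝ} {r : (↥C → V) → ℝ}
    (hqr : Consistent q r) (hCA : C ⊆ A) (hpr : marg p hCA = r) (hBA : B ∩ A ⊆ C) :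
    Consistent q p := by
  have hS : B ∩ A ⊆ B ∩ C := subset_inter inter_subset_left hBA
  calc marg q inter_subset_left
      = marg (marg q inter_subset_left) hS := (marg_marg _ _ _).symm
    _ = marg (marg r inter_subset_right) hS := by rw [hqr]
    _ = marg (marg p hCA) hBA := by rw [marg_marg, hpr]
    _ = marg p inter_subset_right := marg_marg _ _ _

theorem Consistent.of_inter_eq_empty {p : (↥A → V) → ℝ} {q : (↥B → V) → ℝ}
    (h : A ∩ B = ∅) (hpq : ∑ w, p w = ∑ w, q w) : Consistent p q :=
  funext fun _ => by rw [marg_of_eq_empty _ _ h, marg_of_eq_empty _ _ h, hpq]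

end Consistent

section Glue

variable {A B U : Finset ι}

theorem marg_comp_restr {S : Finset ι} (hA : A ⊆ U) (hB : B ⊆ U) (hSA : S ⊆ A) (hSB : S ⊆ B)
    (hU : U ⊆ A ∪ B) (hS : A ∩ B ⊆ S) (f : (↥B → V) → ℝ) (z : ↥A → V) :
    marg (fun w => f (restr hB w)) hA z = marg f hSB (restr hSA z) := by
  unfold marg
  rw [← sum_filter, ← sum_filter]
  -- `w ↦ w|B` is a bijection from the assignments on `U` extending `z` onto those on `B`
  -- that agree with `z` on `S`
  refine sum_nbij' (restr hB) (fun v x => if hx : x.1 ∈ A then z ⟨x, hx⟩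
      else v ⟨x, (mem_union.1 (hU x.2)).resolve_left hx⟩) ?_ ?_ ?_ ?_ (fun _ _ => rfl)
  · intro w hw
    simp only [mem_filter, mem_univ, true_and] at hw ⊢
    subst hw
    rfl
  · intro v hv
    simp only [mem_filter, mem_univ, true_and] at hv ⊢
    funext x
    simp [restr, x.2]
  · intro w hw
    simp only [mem_filter, mem_univ, true_and] at hw
    funext x
    by_cases hx : x.1 ∈ A
    · simp [hx, ← hw, restr]
    · simp [hx, restr]
  · intro v hv
    simp only [mem_filter, mem_univ, true_and] at hv
    funext x
    by_cases hx : x.1 ∈ A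
    · simpa [hx, restr] using (congrFun hv ⟨x, hS (mem_inter.2 ⟨hx, x.2⟩)⟩).symm
    · simp [hx, restr]

/-- The adhesive extension of `p` and `q`. Where the separator marginal vanishes, `x / 0 = 0`
makes it `0`, the right value: for consistent nonnegative `p` and `q`, `p` vanishes there too. -/
noncomputable def glue (hA : A ⊆ U) (hB : B ⊆ U) (p : (↥A → V) → ℝ) (q : (↥B → V) → ℝ) :
    (↥U → V) → ℝ :=
  fun w => p (restr hA w) * q (restr hB w) /
    marg q (inter_subset_left : B ∩ A ⊆ B) (restr (inter_subset_left.trans hB) w)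

variable (hA : A ⊆ U) (hB : B ⊆ U) {p : (↥A → V) → ℝ} {q : (↥B → V) → ℝ}

theorem glue_nonneg (hp : ∀ w, 0 ≤ p w) (hq : ∀ w, 0 ≤ q w) (w : ↥U → V) :
    0 ≤ glue hA hB p q w :=
  div_nonneg (mul_nonneg (hp _) (hq _)) (marg_nonneg hq _ _)

theorem marg_glue_left (hU : U ⊆ A ∪ B) (hp : ∀ w, 0 ≤ p w) (hqp : Consistent q p) :
    marg (glue hA hB p q) hA = p := by
  funext z
  have hfiber : ∀ w, restr hA w = z → glue hA hB p q w =
      p z / marg p inter_subset_right (restr (inter_subset_right : B ∩ A ⊆ A) z) *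
        q (restr hB w) := by
    rintro w rfl
    rw [glue, hqp, mul_div_right_comm]
    rfl
  rw [marg_eq_mul_of_fiber hA z _ hfiber, marg_comp_restr hA hB inter_subset_right
    inter_subset_left hU (inter_comm A B).le, hqp]
  exact div_mul_cancel_of_imp fun h0 => le_antisymm (h0 ▸ le_marg hp _ z) (hp z)

theorem marg_glue_right (hU : U ⊆ A ∪ B) (hq : ∀ w, 0 ≤ q w) (hqp : Consistent q p) :
    marg (glue hA hB p q) hB = q := by
  funext v
  have hfiber : ∀ w, restr hB w = v → glue hA hB p q w =
      q v / marg q inter_subset_left (restr (inter_subset_left : B ∩ A ⊆ B) v) *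
        p (restr hA w) := by
    rintro w rfl
    rw [glue, mul_comm, mul_div_right_comm]
    rfl
  rw [marg_eq_mul_of_fiber hB v _ hfiber, marg_comp_restr hB hA inter_subset_left
    inter_subset_right (union_comm A B ▸ hU) subset_rfl, ← hqp]
  exact div_mul_cancel_of_imp fun h0 => le_antisymm (h0 ▸ le_marg hq _ v) (hq v)

end Glue

/-- `X_A ⊥ X_B | X_{B ∩ A}` under `Q`, stated as the factorization
`Q(A ∪ B) = Q(B) / Q(B ∩ A) · Q(A) / Q(B ∩ A) · Q(B ∩ A)` of its marginals. -/
def CondIndep {W : Finset ι} (Q : (↥W → V) → ℝ) (A B : Finset ι) : Prop :=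
  ∀ (hA : A ⊆ W) (hB : B ⊆ W) (hS : B ∩ A ⊆ W) (hU : A ∪ B ⊆ W) (w : ↥W → V),
    marg Q hU (restr hU w) =
      marg Q hB (restr hB w) / marg Q hS (restr hS w) *
        (marg Q hA (restr hA w) / marg Q hS (restr hS w)) * marg Q hS (restr hS w)

theorem condIndep_of_marg_eq_glue {W A B U : Finset ι} {Q : (↥W → V) → ℝ} (hAU : A ⊆ U)
    (hBU : B ⊆ U) (hUW : U ⊆ W) (hU : U = A ∪ B)
    (h : marg Q hUW = glue hAU hBU (marg Q (hAU.trans hUW)) (marg Q (hBU.trans hUW))) :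
    CondIndep Q A B := by
  subst hU
  intro hA hB hS hAB w
  have key : ∀ a b c : ℝ, a * b / c = b / c * (a / c) * c := by
    intro a b c
    rcases eq_or_ne c 0 with rfl | hc
    · simp
    · field_simp
  rw [h, glue, marg_marg]
  exact key _ _ _

section Extension

variable {n : ℕ} {E : Fin n → Finset ι} {P : (i : Fin n) → (↥(E i) → V) → ℝ}

def prefixUnion (E : Fin n → Finset ι) (m : ℕ) : Finset ι :=
  (univ.filter fun k : Fin n => (k : ℕ) < m).biUnion E

theorem mem_prefixUnion {m : ℕ} {x : ι} :
    x ∈ prefixUnion E m ↔ ∃ k : Fin n, (k : ℕ) < m ∧ x ∈ E k := by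
  simp [prefixUnion]

theorem prefixUnion_mono : Monotone (prefixUnion E) := fun _ _ h _ hx =>
  let ⟨k, hk, hxk⟩ := mem_prefixUnion.1 hx
  mem_prefixUnion.2 ⟨k, hk.trans_le h, hxk⟩

theorem subset_prefixUnion {k : Fin n} {m : ℕ} (h : (k : ℕ) < m) : E k ⊆ prefixUnion E m :=
  fun _ hx => mem_prefixUnion.2 ⟨k, h, hx⟩

theorem prefixUnion_zero : prefixUnion E 0 = ∅ := by
  simp [prefixUnion]

theorem prefixUnion_val (i : Fin n) : prefixUnion E i = prevU E i := by
  simp [prefixUnion, prevU]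

theorem prefixUnion_succ (i : Fin n) : prefixUnion E (i + 1) = prefixUnion E i ∪ E i := by
  ext x
  simp only [mem_union, mem_prefixUnion, Nat.lt_succ_iff_lt_or_eq, or_and_right, exists_or,
    ← Fin.ext_iff, exists_eq_left]

theorem prefixUnion_eq_biUnion : prefixUnion E n = univ.biUnion E := by
  simp [prefixUnion]

noncomputable def extension (E : Fin n → Finset ι) (P : (i : Fin n) → (↥(E i) → V) → ℝ) :
    (m : ℕ) → (↥(prefixUnion E m) → V) → ℝ
  | 0 => fun _ => 1
  | m + 1 =>
    if h : m < n then
      glue (prefixUnion_mono m.le_succ) (subset_prefixUnion (k := ⟨m, h⟩) m.lt_succ_self)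
        (extension E P m) (P ⟨m, h⟩)
    else fun w => extension E P m (restr (prefixUnion_mono m.le_succ) w)

theorem extension_succ {m : ℕ} (h : m < n) :
    extension E P (m + 1) =
      glue (prefixUnion_mono m.le_succ) (subset_prefixUnion (k := ⟨m, h⟩) m.lt_succ_self)
        (extension E P m) (P ⟨m, h⟩) := by
  rw [extension, dif_pos h]

theorem consistent_extension (hRIP : RIP E) (h1 : ∀ i, ∑ w, P i w = 1)
    (hcons : ∀ i j, Consistent (P i) (P j)) (i : Fin n) (hsum : ∑ w, extension E P i w = 1)
    (hmarg : ∀ (k : Fin n) (hk : (k : ℕ) < i),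
      marg (extension E P i) (subset_prefixUnion hk) = P k) :
    Consistent (P i) (extension E P i) := by
  rcases Nat.eq_zero_or_pos i with hi | hi
  · refine Consistent.of_inter_eq_empty ?_ (by rw [h1, hsum])
    rw [hi, prefixUnion_zero, inter_empty]
  · obtain ⟨j, hji, hsub⟩ := hRIP i hi
    refine (hcons i j).of_marg_eq (subset_prefixUnion hji) (hmarg j hji) ?_
    rw [prefixUnion_val]
    exact hsub

theorem marg_extension_succ {m : ℕ} (h : m < n) (h0m : ∀ w, 0 ≤ extension E P m w)
    (hc : Consistent (P ⟨m, h⟩) (extension E P m)) :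
    marg (extension E P (m + 1)) (prefixUnion_mono m.le_succ) = extension E P m := by
  rw [extension_succ h]
  exact marg_glue_left _ _ (prefixUnion_succ ⟨m, h⟩).le h0m hc

theorem extension_spec (hRIP : RIP E) (h0 : ∀ i w, 0 ≤ P i w) (h1 : ∀ i, ∑ w, P i w = 1)
    (hcons : ∀ i j, Consistent (P i) (P j)) {m : ℕ} (hm : m ≤ n) :
    (∀ w, 0 ≤ extension E P m w) ∧ ∑ w, extension E P m w = 1 ∧
      ∀ (k : Fin n) (hk : (k : ℕ) < m), marg (extension E P m) (subset_prefixUnion hk) = P k := by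
  induction m with
  | zero =>
    exact ⟨fun _ => zero_le_one, by simp [extension, prefixUnion_zero],
      fun k hk => absurd hk k.val.not_lt_zero⟩
  | succ m ih =>
    have hmn : m < n := hm
    obtain ⟨ih0, ih1, ihP⟩ := ih hmn.le
    have hc := consistent_extension hRIP h1 hcons ⟨m, hmn⟩ ih1 ihP
    have hprefix := marg_extension_succ hmn ih0 hc
    refine ⟨?_, ?_, fun k hk => ?_⟩
    · rw [extension_succ hmn]
      exact glue_nonneg _ _ ih0 (h0 _)
    · rw [← sum_marg _ (prefixUnion_mono m.le_succ), hprefix, ih1]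
    · rcases Nat.lt_succ_iff_lt_or_eq.1 hk with hk | hk
      · rw [← marg_marg _ (prefixUnion_mono m.le_succ) (subset_prefixUnion hk), hprefix, ihP k hk]
      · obtain rfl : k = ⟨m, hmn⟩ := Fin.ext hk
        rw [extension_succ hmn]
        exact marg_glue_right _ _ (prefixUnion_succ ⟨m, hmn⟩).le (h0 _) hc

theorem marg_extension_of_le (hRIP : RIP E) (h0 : ∀ i w, 0 ≤ P i w) (h1 : ∀ i, ∑ w, P i w = 1)
    (hcons : ∀ i j, Consistent (P i) (P j)) {m m' : ℕ} (hmm' : m ≤ m') (hm' : m' ≤ n) :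
    marg (extension E P m') (prefixUnion_mono hmm') = extension E P m := by
  induction m', hmm' using Nat.le_induction with
  | base => exact marg_self _ _
  | succ m' hmm' ih =>
    have hmn : m' < n := hm'
    obtain ⟨h0m, h1m, hPm⟩ := extension_spec hRIP h0 h1 hcons hmn.le
    rw [← marg_marg _ (prefixUnion_mono m'.le_succ) (prefixUnion_mono hmm'),
      marg_extension_succ hmn h0m (consistent_extension hRIP h1 hcons ⟨m', hmn⟩ h1m hPm),
      ih hmn.le]

theorem condIndep_extension (hRIP : RIP E) (h0 : ∀ i w, 0 ≤ P i w) (h1 : ∀ i, ∑ w, P i w = 1)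
    (hcons : ∀ i j, Consistent (P i) (P j)) (i : Fin n) :
    CondIndep (extension E P n) (prefixUnion E i) (E i) := by
  obtain ⟨-, -, hPn⟩ := extension_spec hRIP h0 h1 hcons le_rfl
  refine condIndep_of_marg_eq_glue (prefixUnion_mono (i : ℕ).le_succ)
    (subset_prefixUnion (i : ℕ).lt_succ_self) (prefixUnion_mono i.isLt) (prefixUnion_succ i) ?_
  rw [marg_extension_of_le hRIP h0 h1 hcons i.isLt le_rfl,
    marg_extension_of_le hRIP h0 h1 hcons i.isLt.le le_rfl, hPn i i.isLt, extension_succ i.isLt]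

theorem exists_extension_condIndep (hRIP : RIP E) (h0 : ∀ i w, 0 ≤ P i w)
    (h1 : ∀ i, ∑ w, P i w = 1) (hcons : ∀ i j, Consistent (P i) (P j)) :
    ∃ Q : (↥(univ.biUnion E) → V) → ℝ, (∀ w, 0 ≤ Q w) ∧ ∑ w, Q w = 1 ∧
      (∀ i (h : E i ⊆ univ.biUnion E), marg Q h = P i) ∧ ∀ i, CondIndep Q (prevU E i) (E i) := by
  rw [← prefixUnion_eq_biUnion]
  obtain ⟨h0n, h1n, hPn⟩ := extension_spec hRIP h0 h1 hcons le_rfl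
  refine ⟨extension E P n, h0n, h1n, fun i _ => hPn i i.isLt, fun i => ?_⟩
  rw [← prefixUnion_val]
  exact condIndep_extension hRIP h0 h1 hcons i

end Extension

/-- In the global extension constructed in Vorob'ev's theorem via iterated adhesive
extensions, for each `i ≥ 2` the conditional independence
`(X_{R_i} ⊥ X_{(E_1∪…∪E_{i−1})∖S_i} | X_{S_i})` holds, where
`S_i = E_i ∩ (E_1∪…∪E_{i−1})` and `R_i = E_i ∖ S_i`; since `R_i ∪ S_i = E_i` and
`((E_1∪…∪E_{i−1})∖S_i) ∪ S_i = E_1∪…∪E_{i−1}`, this is stated via the factorization of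
the marginal on `E_1∪…∪E_i` into the conditionals of `E_i` and `E_1∪…∪E_{i−1}`
given `S_i`. -/
theorem vorobev_extension_conditional_independence {n : ℕ}
    (E : Fin n → Finset ι) (hRIP : RIP E)
    (P : (i : Fin n) → ((↥(E i) → V) → ℝ))
    (h0 : ∀ i w, 0 ≤ P i w) (h1 : ∀ i, ∑ w, P i w = 1)
    (hcons : ∀ i j : Fin n,
      marg (P i) (inter_subset_left : E i ∩ E j ⊆ E i) =
      marg (P j) (inter_subset_right : E i ∩ E j ⊆ E j)) :
    ∃ Q : (↥(Finset.univ.biUnion E) → V) → ℝ,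
      (∀ w, 0 ≤ Q w) ∧ (∑ w, Q w = 1) ∧
      (∀ i : Fin n,
        marg Q (Finset.subset_biUnion_of_mem E (Finset.mem_univ i)) = P i) ∧
      ∀ i : Fin n, 0 < (i : ℕ) →
        ∀ w : ↥(Finset.univ.biUnion E) → V,
          marg Q (upto_subset E i) (restr (upto_subset E i) w) =
            (marg Q (edge_subset E i) (restr (edge_subset E i) w) /
              marg Q (sep_subset E i) (restr (sep_subset E i) w)) *
            (marg Q (prevU_subset E i) (restr (prevU_subset E i) w) /
              marg Q (sep_subset E i) (restr (sep_subset E i) w)) *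
            marg Q (sep_subset E i) (restr (sep_subset E i) w) := by
  obtain ⟨Q, hQ0, hQ1, hQP, hQ⟩ := exists_extension_condIndep hRIP h0 h1 hcons
  exact ⟨Q, hQ0, hQ1, fun i => hQP i _, fun i _ => hQ i _ _ _ _⟩
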